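/- Let n ≥ 1 and let {S₀, S₊₁, S₋₁, S₊, S₋, S_F} be a partition of S_{n,n} into (possibly empty) parts. An ASM A is S-compatible if A(s) = 0 for s ∈ S₀, A(s) = +1 for s ∈ S₊₁, A(s) = −1 for s ∈ S₋₁, A(s) ≥ 0 for s ∈ S₊, and A(s) ≤ 0 for s ∈ S₋. Then there exists an S-compatible alternating sign matrix of order n if and only if for all X₁, X₂ ⊆ S_{n,n} satisfying (X₁ ∪ X₂)ᶜ ⊆ S₀ ∪ S₋₁ ∪ S₋ and X₁ ∩ X₂ ⊆ S₀ ∪ S₊₁ ∪ S₊, the inequality σ₁(X₁) + σ₂(X₂) ≥ n + |S₋₁ ∩ (X₁ ∪ X₂)ᶜ| + |S₊₁ ∩ X₁ ∩ X₂| holds. -/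

import Mathlib

/-- The set of positions of an m×n matrix, 1-based: S_{m,n} = [m] × [n]. -/
def Smn (m n : ℕ) : Finset (ℕ × ℕ) := Finset.Icc 1 m ×ˢ Finset.Icc 1 n

/-- The horizontal prefix P¹_{i,j} = {(i,1), …, (i,j)}. -/
def hPrefix (i j : ℕ) : Finset (ℕ × ℕ) := {i} ×ˢ Finset.Icc 1 j

/-- The vertical prefix P²_{i,j} = {(1,j), …, (i,j)}. -/
def vPrefix (i j : ℕ) : Finset (ℕ × ℕ) := Finset.Icc 1 i ×ˢ {j}

/-- x̃(X), the sum of the entries of x at the positions in X. -/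
def fsum (x : ℕ × ℕ → ℤ) (X : Finset (ℕ × ℕ)) : ℤ := ∑ s ∈ X, x s

/-- A is a prefix-bounded matrix (PBM) of size m×n with respect to the
horizontal-prefix bounds Φ1 ≤ Γ1 and the vertical-prefix bounds Φ2 ≤ Γ2. -/
def IsPBM (m n : ℕ) (Φ1 Γ1 Φ2 Γ2 : ℕ × ℕ → ℤ) (A : ℕ × ℕ → ℤ) : Prop :=
  ∀ i ∈ Finset.Icc 1 m, ∀ j ∈ Finset.Icc 1 n,
    (Φ1 (i, j) ≤ fsum A (hPrefix i j) ∧ fsum A (hPrefix i j) ≤ Γ1 (i, j)) ∧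
    (Φ2 (i, j) ≤ fsum A (vPrefix i j) ∧ fsum A (vPrefix i j) ≤ Γ2 (i, j))

/-- Starting positions of the maximal horizontal segments of X ⊆ S_{m,n}. -/
def hStarts (X : Finset (ℕ × ℕ)) : Finset (ℕ × ℕ) :=
  X.filter (fun s => (s.1, s.2 - 1) ∉ X)

/-- Ending positions of the maximal horizontal segments of X ⊆ S_{m,n}. -/
def hEnds (X : Finset (ℕ × ℕ)) : Finset (ℕ × ℕ) :=
  X.filter (fun s => (s.1, s.2 + 1) ∉ X)

/-- Starting positions of the maximal vertical segments of X ⊆ S_{m,n}. -/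
def vStarts (X : Finset (ℕ × ℕ)) : Finset (ℕ × ℕ) :=
  X.filter (fun s => (s.1 - 1, s.2) ∉ X)

/-- Ending positions of the maximal vertical segments of X ⊆ S_{m,n}. -/
def vEnds (X : Finset (ℕ × ℕ)) : Finset (ℕ × ℕ) :=
  X.filter (fun s => (s.1 + 1, s.2) ∉ X)

/-- σ₁(X): the number of maximal horizontal segments of X. -/
def sigma1 (X : Finset (ℕ × ℕ)) : ℕ := (hStarts X).card

/-- σ₂(X): the number of maximal vertical segments of X. -/
def sigma2 (X : Finset (ℕ × ℕ)) : ℕ := (vStarts X).card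

/-- p*₁(X) = Σ [Φ¹(i,j₂) − Γ¹(i,j₁−1)] over the maximal horizontal segments
{(i,j₁),…,(i,j₂)} of X, with the convention Γ¹(i,0) = 0. -/
def pstar1 (Φ1 Γ1 : ℕ × ℕ → ℤ) (X : Finset (ℕ × ℕ)) : ℤ :=
  ∑ s ∈ hEnds X, Φ1 s -
    ∑ s ∈ hStarts X, (if s.2 = 1 then 0 else Γ1 (s.1, s.2 - 1))

/-- b*₁(X) = Σ [Γ¹(i,j₂) − Φ¹(i,j₁−1)] over the maximal horizontal segments
{(i,j₁),…,(i,j₂)} of X, with the convention Φ¹(i,0) = 0. -/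
def bstar1 (Φ1 Γ1 : ℕ × ℕ → ℤ) (X : Finset (ℕ × ℕ)) : ℤ :=
  ∑ s ∈ hEnds X, Γ1 s -
    ∑ s ∈ hStarts X, (if s.2 = 1 then 0 else Φ1 (s.1, s.2 - 1))

/-- p*₂(X) = Σ [Φ²(i₂,j) − Γ²(i₁−1,j)] over the maximal vertical segments
{(i₁,j),…,(i₂,j)} of X, with the convention Γ²(0,j) = 0. -/
def pstar2 (Φ2 Γ2 : ℕ × ℕ → ℤ) (X : Finset (ℕ × ℕ)) : ℤ :=
  ∑ s ∈ vEnds X, Φ2 s -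
    ∑ s ∈ vStarts X, (if s.1 = 1 then 0 else Γ2 (s.1 - 1, s.2))

/-- b*₂(X) = Σ [Γ²(i₂,j) − Φ²(i₁−1,j)] over the maximal vertical segments
{(i₁,j),…,(i₂,j)} of X, with the convention Φ²(0,j) = 0. -/
def bstar2 (Φ2 Γ2 : ℕ × ℕ → ℤ) (X : Finset (ℕ × ℕ)) : ℤ :=
  ∑ s ∈ vEnds X, Γ2 s -
    ∑ s ∈ vStarts X, (if s.1 = 1 then 0 else Φ2 (s.1 - 1, s.2))

/-- A is an alternating sign matrix (ASM) of order n: every horizontal and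
vertical prefix sum lies in {0, 1}, and every full row sum and full column
sum equals 1. -/
def IsASM (n : ℕ) (A : ℕ × ℕ → ℤ) : Prop :=
  (∀ i ∈ Finset.Icc 1 n, ∀ j ∈ Finset.Icc 1 n,
    (fsum A (hPrefix i j) = 0 ∨ fsum A (hPrefix i j) = 1) ∧
    (fsum A (vPrefix i j) = 0 ∨ fsum A (vPrefix i j) = 1)) ∧
  (∀ i ∈ Finset.Icc 1 n, fsum A (hPrefix i n) = 1) ∧
  (∀ j ∈ Finset.Icc 1 n, fsum A (vPrefix n j) = 1)

/-!
Write `sigmaSlack lower upper (X₁, X₂) = σ₁(X₁) + σ₂(X₂) + upper(C) - lower(X₁ ∩ X₂) - n` with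
`C` the complement of `X₁ ∪ X₂`. If `A` is an ASM with `lower ≤ A ≤ upper`, every maximal segment
carries a sum of at most one, so `A(X₁) ≤ σ₁(X₁)` and `A(X₂) ≤ σ₂(X₂)`, while
`A(X₁) + A(X₂) = n - A(C) + A(X₁ ∩ X₂)`; hence every slack is nonnegative.

Conversely, shrink the interval `[lower s, upper s]` of one cell at a time. If neither raising
`lower s` nor lowering `upper s` preserved nonnegative slack, the two tight violating pairs could
be uncrossed, by submodularity of `σ₁` and `σ₂`, into a pair of negative slack. When the bounds
meet, the slack of a row prefix paired with everything, and of its complement paired with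
nothing, forces all prefix sums into `{0, 1}` and all row sums to `1`; the same for columns.

For the bounds given by the partition, a pair violating the sign constraints can be repaired
without increasing its slack, and on pairs respecting them the slack inequality is the one in
the theorem.
-/

open Finset

section Segments

variable {m n : ℕ}

lemma mem_Smn {t : ℕ × ℕ} : t ∈ Smn m n ↔ (1 ≤ t.1 ∧ t.1 ≤ m) ∧ (1 ≤ t.2 ∧ t.2 ≤ n) := by
  simp [Smn]

lemma hPrefix_subset_Smn {i j : ℕ} (hi : i ∈ Icc 1 m) (hj : j ≤ n) : hPrefix i j ⊆ Smn m n := by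
  intro t ht
  simp only [hPrefix, mem_product, mem_singleton, mem_Icc] at ht hi
  exact mem_Smn.2 ⟨ht.1 ▸ hi, ht.2.1, ht.2.2.trans hj⟩

lemma vPrefix_subset_Smn {i j : ℕ} (hi : i ≤ m) (hj : j ∈ Icc 1 n) : vPrefix i j ⊆ Smn m n := by
  intro t ht
  simp only [vPrefix, mem_product, mem_singleton, mem_Icc] at ht hj
  exact mem_Smn.2 ⟨⟨ht.1.1, ht.1.2.trans hi⟩, ht.2 ▸ hj⟩

/-- `sigma1` and `sigma2` are such counts, with `g` the left, resp. upper, neighbour. -/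
lemma card_filter_union_add_card_filter_inter_le {α : Type*} [DecidableEq α] (g : α → α)
    (A B : Finset α) :
    #{t ∈ A ∪ B | g t ∉ A ∪ B} + #{t ∈ A ∩ B | g t ∉ A ∩ B} ≤
      #{t ∈ A | g t ∉ A} + #{t ∈ B | g t ∉ B} := by
  have hunion : {t ∈ A ∪ B | g t ∉ A ∪ B} ∪ {t ∈ A ∩ B | g t ∉ A ∩ B} ⊆
      {t ∈ A | g t ∉ A} ∪ {t ∈ B | g t ∉ B} := by
    intro t; simp only [mem_union, mem_inter, mem_filter]; tauto
  have hinter : {t ∈ A ∪ B | g t ∉ A ∪ B} ∩ {t ∈ A ∩ B | g t ∉ A ∩ B} ⊆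
      {t ∈ A | g t ∉ A} ∩ {t ∈ B | g t ∉ B} := by
    intro t; simp only [mem_union, mem_inter, mem_filter]; tauto
  rw [← card_union_add_card_inter, ← card_union_add_card_inter {t ∈ A | g t ∉ A}]
  exact add_le_add (card_le_card hunion) (card_le_card hinter)

lemma sigma1_union_add_sigma1_inter_le (A B : Finset (ℕ × ℕ)) :
    sigma1 (A ∪ B) + sigma1 (A ∩ B) ≤ sigma1 A + sigma1 B :=
  card_filter_union_add_card_filter_inter_le (fun t => (t.1, t.2 - 1)) A B

lemma sigma2_union_add_sigma2_inter_le (A B : Finset (ℕ × ℕ)) :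
    sigma2 (A ∪ B) + sigma2 (A ∩ B) ≤ sigma2 A + sigma2 B :=
  card_filter_union_add_card_filter_inter_le (fun t => (t.1 - 1, t.2)) A B

lemma sigma1_union_le (X B : Finset (ℕ × ℕ)) : sigma1 (X ∪ B) ≤ sigma1 X + #B := by
  refine (card_le_card fun t => ?_).trans (card_union_le (hStarts X) B)
  simp only [hStarts, mem_filter, mem_union]
  tauto

lemma sigma2_sdiff_le (X B : Finset (ℕ × ℕ)) : sigma2 (X \ B) ≤ sigma2 X + #B := by
  refine (card_le_card fun t => ?_).trans
    ((card_union_le (vStarts X) (B.image fun t => (t.1 + 1, t.2))).trans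
      (add_le_add le_rfl card_image_le))
  obtain ⟨a, b⟩ := t
  simp only [vStarts, mem_filter, mem_sdiff, mem_union, mem_image]
  rintro ⟨⟨htX, htB⟩, hpred⟩
  by_cases hp : (a - 1, b) ∈ X
  · have hpB : (a - 1, b) ∈ B := not_not.1 fun h => hpred ⟨hp, h⟩
    have ha : a ≠ 0 := by rintro rfl; exact htB hpB
    exact Or.inr ⟨_, hpB, by simp; omega⟩
  · exact Or.inl ⟨htX, hp⟩

end Segments

section Bounds

variable {m n : ℕ}

lemma sigma1_hPrefix_le (i j : ℕ) : sigma1 (hPrefix i j) ≤ 1 := by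
  refine (card_le_card (t := {(i, 1)}) fun t => ?_).trans (card_singleton _).le
  simp only [hStarts, hPrefix, mem_filter, mem_product, mem_singleton, mem_Icc, Prod.ext_iff]
  omega

lemma sigma1_Smn_le : sigma1 (Smn m n) ≤ m := by
  refine (card_le_card (t := Icc 1 m ×ˢ {1}) fun t => ?_).trans (by simp)
  simp only [hStarts, mem_filter, mem_Smn, mem_product, mem_singleton, mem_Icc]
  omega

lemma sigma1_Smn_sdiff_hPrefix_le {i j : ℕ} (hi : i ∈ Icc 1 m) :
    sigma1 (Smn m n \ hPrefix i j) + (if j < n then 0 else 1) ≤ m := by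
  have hsub : hStarts (Smn m n \ hPrefix i j) ⊆
      (Icc 1 m).erase i ×ˢ {1} ∪ if j < n then {(i, j + 1)} else ∅ := by
    intro t
    simp only [hStarts, hPrefix, mem_filter, mem_sdiff, mem_Smn, mem_product, mem_singleton,
      mem_Icc, mem_union, mem_erase]
    split_ifs <;> simp only [mem_singleton, Prod.ext_iff, notMem_empty] <;> omega
  have hcard := (card_le_card hsub).trans (card_union_le _ _)
  rw [card_product, card_erase_of_mem hi, Nat.card_Icc, card_singleton, mul_one] at hcard
  simp only [mem_Icc] at hi
  unfold sigma1
  split_ifs at hcard ⊢ <;> simp only [card_singleton, card_empty] at hcard <;> omega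

lemma image_swap_Smn : (Smn m n).image Prod.swap = Smn n m := by
  simp [Smn, image_swap_product]

lemma image_swap_vPrefix (i j : ℕ) : (vPrefix i j).image Prod.swap = hPrefix j i := by
  rw [vPrefix, hPrefix, image_swap_product]

lemma sigma2_eq_sigma1_image_swap (X : Finset (ℕ × ℕ)) :
    sigma2 X = sigma1 (X.image Prod.swap) := by
  have hstarts : hStarts (X.image Prod.swap) = (vStarts X).image Prod.swap := by
    ext ⟨a, b⟩
    simp [hStarts, vStarts, Prod.swap]
  rw [sigma1, hstarts, card_image_of_injective _ Prod.swap_injective, sigma2]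

lemma fsum_image_swap (A : ℕ × ℕ → ℤ) (X : Finset (ℕ × ℕ)) :
    fsum (A ∘ Prod.swap) (X.image Prod.swap) = fsum A X := by
  simp [fsum, sum_image Prod.swap_injective.injOn]

lemma sigma2_vPrefix_le (i j : ℕ) : sigma2 (vPrefix i j) ≤ 1 := by
  rw [sigma2_eq_sigma1_image_swap, image_swap_vPrefix]
  exact sigma1_hPrefix_le j i

lemma sigma2_Smn_le : sigma2 (Smn m n) ≤ n := by
  rw [sigma2_eq_sigma1_image_swap, image_swap_Smn]
  exact sigma1_Smn_le

lemma sigma2_Smn_sdiff_vPrefix_le {i j : ℕ} (hj : j ∈ Icc 1 n) :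
    sigma2 (Smn m n \ vPrefix i j) + (if i < m then 0 else 1) ≤ n := by
  rw [sigma2_eq_sigma1_image_swap, image_sdiff _ _ Prod.swap_injective, image_swap_Smn,
    image_swap_vPrefix]
  exact sigma1_Smn_sdiff_hPrefix_le hj

end Bounds

section Telescoping

variable {m n : ℕ} {A : ℕ × ℕ → ℤ} {X : Finset (ℕ × ℕ)}

lemma fsum_hPrefix_zero (A : ℕ × ℕ → ℤ) (i : ℕ) : fsum A (hPrefix i 0) = 0 := by
  simp [fsum, hPrefix]

lemma fsum_hPrefix_succ (A : ℕ × ℕ → ℤ) (i j : ℕ) :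
    fsum A (hPrefix i (j + 1)) = fsum A (hPrefix i j) + A (i, j + 1) := by
  simp [fsum, hPrefix, sum_Icc_succ_top]

lemma fsum_comp_swap_hPrefix (A : ℕ × ℕ → ℤ) (i j : ℕ) :
    fsum (A ∘ Prod.swap) (hPrefix j i) = fsum A (vPrefix i j) := by
  rw [← image_swap_vPrefix, fsum_image_swap]

/-- Summation by parts along the maximal horizontal segments. -/
lemma sum_sub_left_eq (hX : ∀ t ∈ X, 1 ≤ t.2) (g : ℕ × ℕ → ℤ) :
    ∑ t ∈ X, (g t - g (t.1, t.2 - 1)) =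
      ∑ t ∈ hEnds X, g t - ∑ t ∈ hStarts X, g (t.1, t.2 - 1) := by
  have hshift : ∑ t ∈ X \ hEnds X, g t = ∑ t ∈ X \ hStarts X, g (t.1, t.2 - 1) := by
    have hleft : ∀ t ∈ X, (t.1, t.2 - 1 + 1) = t := fun t ht => by
      rw [Nat.sub_add_cancel (hX t ht)]
    refine sum_nbij' (fun t => (t.1, t.2 + 1)) (fun t => (t.1, t.2 - 1)) ?_ ?_ ?_ ?_ ?_ <;>
      simp only [hEnds, hStarts, mem_sdiff, mem_filter, not_and, not_not]
    · exact fun t ht => ⟨ht.2 ht.1, fun _ => by simpa using ht.1⟩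
    · exact fun t ht => ⟨ht.2 ht.1, fun _ => by rw [hleft t ht.1]; exact ht.1⟩
    · simp
    · exact fun t ht => hleft t ht.1
    · simp
  have hE : hEnds X ⊆ X := filter_subset _ X
  have hS : hStarts X ⊆ X := filter_subset _ X
  rw [sum_sub_distrib, ← sum_sdiff hE, ← sum_sdiff hS, hshift]
  ring

lemma card_hEnds (hX : ∀ t ∈ X, 1 ≤ t.2) : #(hEnds X) = #(hStarts X) := by
  have := sum_sub_left_eq hX fun _ => 1
  simp only [sub_self, sum_const_zero, sum_const, nsmul_eq_mul, mul_one] at this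
  exact_mod_cast (sub_eq_zero.1 this.symm)

/-- A maximal segment from `(i, a)` to `(i, b)` contributes `p (i, b) - p (i, a - 1) ≤ 1 - 0`,
where `p` is the row prefix sum. -/
lemma fsum_le_sigma1 (hX : X ⊆ Smn m n)
    (hA : ∀ i ∈ Icc 1 m, ∀ j ≤ n, 0 ≤ fsum A (hPrefix i j) ∧ fsum A (hPrefix i j) ≤ 1) :
    fsum A X ≤ sigma1 X := by
  have hmem : ∀ t ∈ X, t.1 ∈ Icc 1 m ∧ 1 ≤ t.2 ∧ t.2 ≤ n := fun t ht => by
    have := mem_Smn.1 (hX ht); simp only [mem_Icc]; omega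
  set p : ℕ × ℕ → ℤ := fun t => fsum A (hPrefix t.1 t.2)
  have htel : fsum A X = ∑ t ∈ X, (p t - p (t.1, t.2 - 1)) := by
    refine sum_congr rfl fun t ht => ?_
    obtain ⟨i, j⟩ := t
    obtain ⟨k, rfl⟩ := Nat.exists_eq_add_of_le' (hmem _ ht).2.1
    simp [p, fsum_hPrefix_succ]
  have hends : ∑ t ∈ hEnds X, p t ≤ #(hEnds X) := by
    calc ∑ t ∈ hEnds X, p t ≤ ∑ t ∈ hEnds X, 1 := sum_le_sum fun t ht => by
          have := hmem t (filter_subset _ X ht)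
          exact (hA _ this.1 _ this.2.2).2
      _ = #(hEnds X) := by simp
  have hstarts : 0 ≤ ∑ t ∈ hStarts X, p (t.1, t.2 - 1) := by
    refine sum_nonneg fun t ht => ?_
    have := hmem t (filter_subset _ X ht)
    exact (hA _ this.1 _ (by omega)).1
  rw [htel, sum_sub_left_eq fun t ht => (hmem t ht).2.1, sigma1,
    ← card_hEnds fun t ht => (hmem t ht).2.1]
  linarith

lemma fsum_le_sigma2 (hX : X ⊆ Smn m n)
    (hA : ∀ i ≤ m, ∀ j ∈ Icc 1 n, 0 ≤ fsum A (vPrefix i j) ∧ fsum A (vPrefix i j) ≤ 1) :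
    fsum A X ≤ sigma2 X := by
  rw [← fsum_image_swap, sigma2_eq_sigma1_image_swap]
  refine fsum_le_sigma1 ((image_subset_image hX).trans image_swap_Smn.le) fun j hj i hi => ?_
  rw [fsum_comp_swap_hPrefix]
  exact hA i hi j hj

end Telescoping

section SigmaCond

variable {n : ℕ} {A lower upper : ℕ × ℕ → ℤ}

/-- For sign bounds and pairs respecting the signs, `0 ≤ sigmaSlack` is the inequality of the
theorem. Unlike that inequality it makes sense for every pair, which is what lets pairs be
uncrossed. -/
def sigmaSlack (n : ℕ) (lower upper : ℕ × ℕ → ℤ) (X₁ X₂ : Finset (ℕ × ℕ)) : ℤ :=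
  sigma1 X₁ + sigma2 X₂ + fsum upper (Smn n n \ (X₁ ∪ X₂)) - fsum lower (X₁ ∩ X₂) - n

def SigmaCond (n : ℕ) (lower upper : ℕ × ℕ → ℤ) : Prop :=
  ∀ X₁ ⊆ Smn n n, ∀ X₂ ⊆ Smn n n, 0 ≤ sigmaSlack n lower upper X₁ X₂

lemma IsASM.hPrefix_bounds (hA : IsASM n A) {i j : ℕ} (hi : i ∈ Icc 1 n) (hj : j ≤ n) :
    0 ≤ fsum A (hPrefix i j) ∧ fsum A (hPrefix i j) ≤ 1 := by
  rcases Nat.eq_zero_or_pos j with rfl | hj0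
  · simp [fsum_hPrefix_zero]
  · rcases (hA.1 i hi j (mem_Icc.2 ⟨hj0, hj⟩)).1 with h | h <;> rw [h] <;> norm_num

lemma IsASM.vPrefix_bounds (hA : IsASM n A) {i j : ℕ} (hi : i ≤ n) (hj : j ∈ Icc 1 n) :
    0 ≤ fsum A (vPrefix i j) ∧ fsum A (vPrefix i j) ≤ 1 := by
  rcases Nat.eq_zero_or_pos i with rfl | hi0
  · simp [fsum, vPrefix]
  · rcases (hA.1 i (mem_Icc.2 ⟨hi0, hi⟩) j hj).2 with h | h <;> rw [h] <;> norm_num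

lemma IsASM.fsum_Smn (hA : IsASM n A) : fsum A (Smn n n) = n := by
  have hrow : ∀ i ∈ Icc 1 n, ∑ j ∈ Icc 1 n, A (i, j) = 1 := fun i hi => by
    simpa [fsum, hPrefix] using hA.2.1 i hi
  simp [fsum, Smn, sum_product, sum_congr rfl hrow]

lemma IsASM.abs_le_one (hA : IsASM n A) {t : ℕ × ℕ} (ht : t ∈ Smn n n) : |A t| ≤ 1 := by
  obtain ⟨i, j⟩ := t
  obtain ⟨hi, hj⟩ := mem_Smn.1 ht
  obtain ⟨k, rfl⟩ := Nat.exists_eq_add_of_le' hj.1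
  have hcur := hA.hPrefix_bounds (mem_Icc.2 hi) hj.2
  have hprev := hA.hPrefix_bounds (j := k) (mem_Icc.2 hi) (by omega)
  rw [fsum_hPrefix_succ] at hcur
  rw [abs_le]
  constructor <;> linarith

theorem IsASM.sigmaCond (hA : IsASM n A)
    (hbounds : ∀ t ∈ Smn n n, lower t ≤ A t ∧ A t ≤ upper t) : SigmaCond n lower upper := by
  intro X₁ hX₁ X₂ hX₂
  have h₁ : fsum A X₁ ≤ sigma1 X₁ := fsum_le_sigma1 hX₁ fun i hi j hj => hA.hPrefix_bounds hi hj
  have h₂ : fsum A X₂ ≤ sigma2 X₂ := fsum_le_sigma2 hX₂ fun i hi j hj => hA.vPrefix_bounds hi hj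
  have hC : fsum A (Smn n n \ (X₁ ∪ X₂)) ≤ fsum upper (Smn n n \ (X₁ ∪ X₂)) :=
    sum_le_sum fun t ht => (hbounds t (sdiff_subset ht)).2
  have hI : fsum lower (X₁ ∩ X₂) ≤ fsum A (X₁ ∩ X₂) :=
    sum_le_sum fun t ht => (hbounds t (hX₁ (inter_subset_left ht))).1
  have htotal : fsum A (Smn n n \ (X₁ ∪ X₂)) + (fsum A X₁ + fsum A X₂ - fsum A (X₁ ∩ X₂)) = n := by
    rw [← hA.fsum_Smn]
    unfold fsum
    rw [← sum_sdiff (union_subset hX₁ hX₂), ← sum_union_inter]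
    ring
  unfold sigmaSlack
  linarith

end SigmaCond

section Collapse

variable {n : ℕ} {lower upper : ℕ × ℕ → ℤ} {X : Finset (ℕ × ℕ)}

lemma sigmaSlack_Smn_right (hX : X ⊆ Smn n n) :
    sigmaSlack n lower upper X (Smn n n) = sigma1 X + sigma2 (Smn n n) - fsum lower X - n := by
  simp [sigmaSlack, union_eq_right.2 hX, inter_eq_left.2 hX, fsum]

lemma sigmaSlack_empty_right :
    sigmaSlack n lower upper X ∅ = sigma1 X + fsum upper (Smn n n \ X) - n := by
  simp [sigmaSlack, fsum, sigma2, vStarts]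

lemma sigmaSlack_Smn_left (hX : X ⊆ Smn n n) :
    sigmaSlack n lower upper (Smn n n) X = sigma1 (Smn n n) + sigma2 X - fsum lower X - n := by
  simp [sigmaSlack, union_eq_left.2 hX, inter_eq_right.2 hX, fsum]

lemma sigmaSlack_empty_left :
    sigmaSlack n lower upper ∅ X = sigma2 X + fsum upper (Smn n n \ X) - n := by
  simp [sigmaSlack, fsum, sigma1, hStarts]

lemma SigmaCond.fsum_hPrefix_le (h : SigmaCond n lower upper) {i j : ℕ} (hi : i ∈ Icc 1 n)
    (hj : j ≤ n) : fsum lower (hPrefix i j) ≤ 1 := by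
  have hP := hPrefix_subset_Smn hi hj
  have hslack := h _ hP _ subset_rfl
  rw [sigmaSlack_Smn_right hP] at hslack
  have := sigma1_hPrefix_le i j
  have := sigma2_Smn_le (m := n) (n := n)
  omega

lemma SigmaCond.le_fsum_hPrefix (h : SigmaCond n lower upper) {i j : ℕ} (hi : i ∈ Icc 1 n)
    (hj : j ≤ n) : (if j < n then 0 else 1) ≤ fsum upper (hPrefix i j) := by
  have hP := hPrefix_subset_Smn hi hj
  have hslack := h (Smn n n \ hPrefix i j) sdiff_subset ∅ (empty_subset _)
  rw [sigmaSlack_empty_right, Finset.sdiff_sdiff_eq_self hP] at hslack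
  have := sigma1_Smn_sdiff_hPrefix_le (n := n) (j := j) hi
  split_ifs at this ⊢ <;> omega

lemma SigmaCond.fsum_vPrefix_le (h : SigmaCond n lower upper) {i j : ℕ} (hi : i ≤ n)
    (hj : j ∈ Icc 1 n) : fsum lower (vPrefix i j) ≤ 1 := by
  have hP := vPrefix_subset_Smn hi hj
  have hslack := h _ subset_rfl _ hP
  rw [sigmaSlack_Smn_left hP] at hslack
  have := sigma2_vPrefix_le i j
  have := sigma1_Smn_le (m := n) (n := n)
  omega

lemma SigmaCond.le_fsum_vPrefix (h : SigmaCond n lower upper) {i j : ℕ} (hi : i ≤ n)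
    (hj : j ∈ Icc 1 n) : (if i < n then 0 else 1) ≤ fsum upper (vPrefix i j) := by
  have hP := vPrefix_subset_Smn hi hj
  have hslack := h ∅ (empty_subset _) (Smn n n \ vPrefix i j) sdiff_subset
  rw [sigmaSlack_empty_left, Finset.sdiff_sdiff_eq_self hP] at hslack
  have := sigma2_Smn_sdiff_vPrefix_le (m := n) (i := i) hj
  split_ifs at this ⊢ <;> omega

lemma SigmaCond.isASM (h : SigmaCond n lower upper)
    (hcollapse : ∀ t ∈ Smn n n, upper t ≤ lower t) : IsASM n lower := by
  have hrow : ∀ i ∈ Icc 1 n, ∀ j ≤ n,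
      (if j < n then 0 else 1) ≤ fsum lower (hPrefix i j) ∧ fsum lower (hPrefix i j) ≤ 1 :=
    fun i hi j hj => ⟨(h.le_fsum_hPrefix hi hj).trans
      (sum_le_sum fun t ht => hcollapse t (hPrefix_subset_Smn hi hj ht)),
      h.fsum_hPrefix_le hi hj⟩
  have hcol : ∀ i ≤ n, ∀ j ∈ Icc 1 n,
      (if i < n then 0 else 1) ≤ fsum lower (vPrefix i j) ∧ fsum lower (vPrefix i j) ≤ 1 :=
    fun i hi j hj => ⟨(h.le_fsum_vPrefix hi hj).trans
      (sum_le_sum fun t ht => hcollapse t (vPrefix_subset_Smn hi hj ht)),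
      h.fsum_vPrefix_le hi hj⟩
  refine ⟨fun i hi j hj => ⟨?_, ?_⟩, fun i hi => ?_, fun j hj => ?_⟩
  · have := hrow i hi j (mem_Icc.1 hj).2
    split_ifs at this <;> omega
  · have := hcol i (mem_Icc.1 hi).2 j hj
    split_ifs at this <;> omega
  · have := hrow i hi n le_rfl
    rw [if_neg (lt_irrefl n)] at this
    omega
  · have := hcol n le_rfl j hj
    rw [if_neg (lt_irrefl n)] at this
    omega

end Collapse

section Refinement

variable {n : ℕ} {lower upper : ℕ × ℕ → ℤ}

lemma fsum_update (f : ℕ × ℕ → ℤ) (s : ℕ × ℕ) (v : ℤ) (X : Finset (ℕ × ℕ)) :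
    fsum (Function.update f s v) X = fsum f X + if s ∈ X then v - f s else 0 := by
  unfold fsum
  split_ifs with hs
  · rw [sum_update_of_mem hs, sdiff_singleton_eq_erase, ← add_sum_erase _ _ hs]
    ring
  · rw [sum_update_of_notMem hs, add_zero]

lemma sigmaSlack_update_lower (s : ℕ × ℕ) (X₁ X₂ : Finset (ℕ × ℕ)) :
    sigmaSlack n (Function.update lower s (lower s + 1)) upper X₁ X₂ =
      sigmaSlack n lower upper X₁ X₂ - if s ∈ X₁ ∩ X₂ then 1 else 0 := by
  simp only [sigmaSlack, fsum_update]
  split_ifs <;> ring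

lemma sigmaSlack_update_upper (s : ℕ × ℕ) (X₁ X₂ : Finset (ℕ × ℕ)) :
    sigmaSlack n lower (Function.update upper s (upper s - 1)) X₁ X₂ =
      sigmaSlack n lower upper X₁ X₂ - if s ∈ Smn n n \ (X₁ ∪ X₂) then 1 else 0 := by
  simp only [sigmaSlack, fsum_update]
  split_ifs <;> ring

lemma fsum_sdiff_union_sub_fsum_inter {S X₁ X₂ : Finset (ℕ × ℕ)} (hX₁ : X₁ ⊆ S)
    (f g : ℕ × ℕ → ℤ) :
    fsum f (S \ (X₁ ∪ X₂)) - fsum g (X₁ ∩ X₂) =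
      ∑ t ∈ S, ((if t ∉ X₁ ∪ X₂ then f t else 0) - if t ∈ X₁ ∩ X₂ then g t else 0) := by
  rw [sum_sub_distrib, sum_ite_mem, inter_eq_right.2 (inter_subset_left.trans hX₁), fsum, fsum,
    sdiff_eq_filter, sum_filter]

/-- The `σ`-terms are submodular, and cell by cell the bound terms of the uncrossed pairs are at
most those of the original ones; at `s` they drop by `upper s - lower s`. -/
lemma sigmaSlack_uncross (hle : ∀ t ∈ Smn n n, lower t ≤ upper t)
    {X₁ X₂ Y₁ Y₂ : Finset (ℕ × ℕ)} (hX₁ : X₁ ⊆ Smn n n) (hY₁ : Y₁ ⊆ Smn n n) {s : ℕ × ℕ}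
    (hsX : s ∈ X₁ ∩ X₂) (hsY : s ∈ Smn n n \ (Y₁ ∪ Y₂)) :
    sigmaSlack n lower upper (X₁ ∪ Y₁) (X₂ ∩ Y₂) + sigmaSlack n lower upper (X₁ ∩ Y₁) (X₂ ∪ Y₂) +
        (upper s - lower s) ≤
      sigmaSlack n lower upper X₁ X₂ + sigmaSlack n lower upper Y₁ Y₂ := by
  set c : Finset (ℕ × ℕ) → Finset (ℕ × ℕ) → ℕ × ℕ → ℤ := fun Z₁ Z₂ t =>
    (if t ∉ Z₁ ∪ Z₂ then upper t else 0) - if t ∈ Z₁ ∩ Z₂ then lower t else 0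
  have hcell : ∀ t ∈ Smn n n, c (X₁ ∪ Y₁) (X₂ ∩ Y₂) t + c (X₁ ∩ Y₁) (X₂ ∪ Y₂) t +
      (if t = s then upper t - lower t else 0) ≤ c X₁ X₂ t + c Y₁ Y₂ t := by
    intro t ht
    have := hle t ht
    by_cases hts : t = s
    · subst hts
      simp only [mem_inter, mem_sdiff, mem_union, not_or] at hsX hsY
      simp [c, hsX, hsY]
    · simp only [c, if_neg hts, mem_union, mem_inter]
      by_cases h₁ : t ∈ X₁ <;> by_cases h₂ : t ∈ X₂ <;> by_cases h₃ : t ∈ Y₁ <;>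
        by_cases h₄ : t ∈ Y₂ <;> simp [h₁, h₂, h₃, h₄] <;> omega
  have hcells := sum_le_sum hcell
  simp only [sum_add_distrib, sum_ite_eq', if_pos (sdiff_subset hsY)] at hcells
  have := fsum_sdiff_union_sub_fsum_inter (union_subset hX₁ hY₁) upper lower (X₂ := X₂ ∩ Y₂)
  have := fsum_sdiff_union_sub_fsum_inter (X₁ := X₁ ∩ Y₁) (X₂ := X₂ ∪ Y₂)
    (inter_subset_left.trans hX₁) upper lower
  have := fsum_sdiff_union_sub_fsum_inter hX₁ upper lower (X₂ := X₂)
  have := fsum_sdiff_union_sub_fsum_inter hY₁ upper lower (X₂ := Y₂)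
  have := sigma1_union_add_sigma1_inter_le X₁ Y₁
  have := sigma2_union_add_sigma2_inter_le X₂ Y₂
  unfold sigmaSlack
  linarith

/-- If both narrowings failed, the violating pairs would have slack `0`, with `s` in both sets of
the first pair and in neither set of the second; uncrossing them would give a negative slack. -/
lemma SigmaCond.update_lower_or_update_upper (h : SigmaCond n lower upper)
    (hle : ∀ t ∈ Smn n n, lower t ≤ upper t) {s : ℕ × ℕ} (hlt : lower s < upper s) :
    SigmaCond n (Function.update lower s (lower s + 1)) upper ∨
      SigmaCond n lower (Function.update upper s (upper s - 1)) := by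
  by_contra! hfail
  simp only [SigmaCond, not_forall, not_le, exists_prop] at hfail
  obtain ⟨⟨X₁, hX₁, X₂, hX₂, hX⟩, ⟨Y₁, hY₁, Y₂, hY₂, hY⟩⟩ := hfail
  rw [sigmaSlack_update_lower] at hX
  rw [sigmaSlack_update_upper] at hY
  have hsX : s ∈ X₁ ∩ X₂ := by
    by_contra hsX
    rw [if_neg hsX] at hX
    linarith [h X₁ hX₁ X₂ hX₂]
  have hsY : s ∈ Smn n n \ (Y₁ ∪ Y₂) := by
    by_contra hsY
    rw [if_neg hsY] at hY
    linarith [h Y₁ hY₁ Y₂ hY₂]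
  rw [if_pos hsX] at hX
  rw [if_pos hsY] at hY
  have := sigmaSlack_uncross hle hX₁ hY₁ hsX hsY
  have := h (X₁ ∪ Y₁) (union_subset hX₁ hY₁) (X₂ ∩ Y₂) (inter_subset_left.trans hX₂)
  have := h (X₁ ∩ Y₁) (inter_subset_left.trans hX₁) (X₂ ∪ Y₂) (union_subset hX₂ hY₂)
  linarith

end Refinement

section Existence

variable {n : ℕ} {lower upper : ℕ × ℕ → ℤ}

lemma SigmaCond.exists_narrower (h : SigmaCond n lower upper)
    (hle : ∀ t ∈ Smn n n, lower t ≤ upper t) {s : ℕ × ℕ} (hs : s ∈ Smn n n)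
    (hlt : lower s < upper s) :
    ∃ lower' upper', SigmaCond n lower' upper' ∧
      (∀ t ∈ Smn n n, lower t ≤ lower' t ∧ lower' t ≤ upper' t ∧ upper' t ≤ upper t) ∧
      fsum upper' (Smn n n) - fsum lower' (Smn n n) =
        fsum upper (Smn n n) - fsum lower (Smn n n) - 1 := by
  rcases h.update_lower_or_update_upper hle hlt with h' | h' <;>
  · refine ⟨_, _, h', fun t ht => ?_, by rw [fsum_update, if_pos hs]; ring⟩
    have := hle t ht
    rw [Function.update_apply]
    split_ifs with hts
    · subst hts; omega
    · omega

theorem SigmaCond.exists_isASM (h : SigmaCond n lower upper)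
    (hle : ∀ t ∈ Smn n n, lower t ≤ upper t) :
    ∃ A, IsASM n A ∧ ∀ t ∈ Smn n n, lower t ≤ A t ∧ A t ≤ upper t := by
  generalize hw : (fsum upper (Smn n n) - fsum lower (Smn n n)).toNat = w
  induction w using Nat.strong_induction_on generalizing lower upper with
  | _ w ih =>
  by_cases hcollapse : ∀ t ∈ Smn n n, upper t ≤ lower t
  · exact ⟨lower, h.isASM hcollapse, fun t ht => ⟨le_rfl, hle t ht⟩⟩
  push Not at hcollapse
  obtain ⟨s, hs, hlt⟩ := hcollapse
  obtain ⟨lower', upper', h', hbetween, hwidth⟩ := h.exists_narrower hle hs hlt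
  have hle' : ∀ t ∈ Smn n n, lower' t ≤ upper' t := fun t ht => (hbetween t ht).2.1
  have hnonneg : 0 ≤ fsum upper' (Smn n n) - fsum lower' (Smn n n) := by
    rw [fsum, fsum, ← sum_sub_distrib]
    exact sum_nonneg fun t ht => sub_nonneg.2 (hle' t ht)
  obtain ⟨A, hA, hAb⟩ := ih _ (by omega) h' hle' rfl
  exact ⟨A, hA, fun t ht =>
    ⟨(hbetween t ht).1.trans (hAb t ht).1, (hAb t ht).2.trans (hbetween t ht).2.2⟩⟩

end Existence

section SignPattern

variable {n : ℕ} {lower upper : ℕ × ℕ → ℤ}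

lemma fsum_eq_card_inter {f : ℕ × ℕ → ℤ} {C P : Finset (ℕ × ℕ)}
    (hC : ∀ t ∈ C, 0 ≤ f t ∧ f t ≤ 1) (hP : ∀ t ∈ C, t ∈ P ↔ f t = 1) :
    fsum f C = #(P ∩ C) := by
  calc fsum f C = ∑ t ∈ C, if t ∈ P then 1 else 0 := sum_congr rfl fun t ht => by
        have := hC t ht
        split_ifs with h
        · exact (hP t ht).1 h
        · have := mt (hP t ht).2 h
          omega
    _ = #(P ∩ C) := by rw [sum_boole, filter_mem_eq_inter, inter_comm]

lemma fsum_eq_neg_card_inter {f : ℕ × ℕ → ℤ} {C M : Finset (ℕ × ℕ)}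
    (hC : ∀ t ∈ C, -1 ≤ f t ∧ f t ≤ 0) (hM : ∀ t ∈ C, t ∈ M ↔ f t = -1) :
    fsum f C = -#(M ∩ C) := by
  have := fsum_eq_card_inter (f := -f) (P := M) (fun t ht => by have := hC t ht; simp; omega)
    (fun t ht => by rw [hM t ht]; simp [neg_eq_iff_eq_neg])
  simp only [fsum, Pi.neg_apply, sum_neg_distrib] at this
  rw [fsum]
  omega

lemma sigmaSlack_eq_of_signs {M P X₁ X₂ : Finset (ℕ × ℕ)}
    (hcompl : ∀ t ∈ Smn n n \ (X₁ ∪ X₂), -1 ≤ upper t ∧ upper t ≤ 0)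
    (hinter : ∀ t ∈ X₁ ∩ X₂, 0 ≤ lower t ∧ lower t ≤ 1)
    (hM : ∀ t ∈ Smn n n \ (X₁ ∪ X₂), t ∈ M ↔ upper t = -1)
    (hP : ∀ t ∈ X₁ ∩ X₂, t ∈ P ↔ lower t = 1) :
    sigmaSlack n lower upper X₁ X₂ =
      sigma1 X₁ + sigma2 X₂ - n - #(M ∩ (Smn n n \ (X₁ ∪ X₂))) - #(P ∩ X₁ ∩ X₂) := by
  rw [sigmaSlack, fsum_eq_neg_card_inter hcompl hM, fsum_eq_card_inter hinter hP, inter_assoc]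
  ring

/-- Move the cells of the complement with `upper > 0` into `X₁` and take the cells of `X₁ ∩ X₂`
with `lower < 0` out of `X₂`: each moved cell adds at most one segment and lowers the bound terms
by at least one. -/
lemma exists_sigmaSlack_le_of_signs {X₁ X₂ : Finset (ℕ × ℕ)} (hX₁ : X₁ ⊆ Smn n n)
    (hX₂ : X₂ ⊆ Smn n n) :
    ∃ Y₁ ⊆ Smn n n, ∃ Y₂ ⊆ Smn n n, (∀ t ∈ Smn n n \ (Y₁ ∪ Y₂), upper t ≤ 0) ∧
      (∀ t ∈ Y₁ ∩ Y₂, 0 ≤ lower t) ∧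
      sigmaSlack n lower upper Y₁ Y₂ ≤ sigmaSlack n lower upper X₁ X₂ := by
  set C := Smn n n \ (X₁ ∪ X₂)
  set BC := {t ∈ C | 0 < upper t}
  set BI := {t ∈ X₁ ∩ X₂ | lower t < 0}
  have hcompl : Smn n n \ ((X₁ ∪ BC) ∪ (X₂ \ BI)) = {t ∈ C | upper t ≤ 0} := by
    ext t
    simp only [C, BC, BI, mem_sdiff, mem_union, mem_filter, mem_inter]
    by_cases h₁ : t ∈ X₁ <;> by_cases h₂ : t ∈ X₂ <;> by_cases hS : t ∈ Smn n n <;>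
      simp [h₁, h₂, hS]
  have hinter : (X₁ ∪ BC) ∩ (X₂ \ BI) = {t ∈ X₁ ∩ X₂ | 0 ≤ lower t} := by
    ext t
    simp only [C, BC, BI, mem_sdiff, mem_union, mem_filter, mem_inter]
    by_cases h₁ : t ∈ X₁ <;> by_cases h₂ : t ∈ X₂ <;> simp [h₁, h₂]
  refine ⟨X₁ ∪ BC, union_subset hX₁ (filter_subset _ _ |>.trans sdiff_subset),
    X₂ \ BI, sdiff_subset.trans hX₂, ?_, ?_, ?_⟩
  · rw [hcompl]
    exact fun t ht => (mem_filter.1 ht).2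
  · rw [hinter]
    exact fun t ht => (mem_filter.1 ht).2
  have hsplitC := sum_filter_add_sum_filter_not C (fun t => 0 < upper t) upper
  have hsplitI := sum_filter_add_sum_filter_not (X₁ ∩ X₂) (fun t => lower t < 0) lower
  simp only [not_lt] at hsplitC hsplitI
  have hBC : (#BC : ℤ) ≤ ∑ t ∈ BC, upper t := by
    rw [card_eq_sum_ones, Nat.cast_sum]
    exact sum_le_sum fun t ht => by have := (mem_filter.1 ht).2; push_cast; omega
  have hBI : ∑ t ∈ BI, lower t ≤ -#BI := by
    rw [card_eq_sum_ones, Nat.cast_sum, ← sum_neg_distrib]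
    exact sum_le_sum fun t ht => by have := (mem_filter.1 ht).2; push_cast; omega
  have := sigma1_union_le X₁ BC
  have := sigma2_sdiff_le X₂ BI
  simp only [sigmaSlack, hcompl, hinter, fsum]
  linarith

theorem sigmaCond_iff_card_le {D U M P : Finset (ℕ × ℕ)}
    (hupper : ∀ t ∈ Smn n n, -1 ≤ upper t) (hlower : ∀ t ∈ Smn n n, lower t ≤ 1)
    (hD : ∀ t ∈ Smn n n, t ∈ D ↔ upper t ≤ 0) (hU : ∀ t ∈ Smn n n, t ∈ U ↔ 0 ≤ lower t)
    (hM : ∀ t ∈ Smn n n, t ∈ M ↔ upper t = -1) (hP : ∀ t ∈ Smn n n, t ∈ P ↔ lower t = 1) :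
    SigmaCond n lower upper ↔
      ∀ X₁ ⊆ Smn n n, ∀ X₂ ⊆ Smn n n, Smn n n \ (X₁ ∪ X₂) ⊆ D → X₁ ∩ X₂ ⊆ U →
        n + #(M ∩ (Smn n n \ (X₁ ∪ X₂))) + #(P ∩ X₁ ∩ X₂) ≤ sigma1 X₁ + sigma2 X₂ := by
  have hslack : ∀ X₁ ⊆ Smn n n, ∀ X₂, (∀ t ∈ Smn n n \ (X₁ ∪ X₂), upper t ≤ 0) →
      (∀ t ∈ X₁ ∩ X₂, 0 ≤ lower t) →
      sigmaSlack n lower upper X₁ X₂ =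
        sigma1 X₁ + sigma2 X₂ - n - #(M ∩ (Smn n n \ (X₁ ∪ X₂))) - #(P ∩ X₁ ∩ X₂) :=
    fun X₁ hX₁ X₂ hC hI => sigmaSlack_eq_of_signs
      (fun t ht => ⟨hupper t (sdiff_subset ht), hC t ht⟩)
      (fun t ht => ⟨hI t ht, hlower t (hX₁ (inter_subset_left ht))⟩)
      (fun t ht => hM t (sdiff_subset ht)) (fun t ht => hP t (hX₁ (inter_subset_left ht)))
  constructor
  · intro h X₁ hX₁ X₂ hX₂ hC hI
    have := h X₁ hX₁ X₂ hX₂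
    rw [hslack X₁ hX₁ X₂ (fun t ht => (hD t (sdiff_subset ht)).1 (hC ht))
      (fun t ht => (hU t (hX₁ (inter_subset_left ht))).1 (hI ht))] at this
    omega
  · intro h X₁ hX₁ X₂ hX₂
    obtain ⟨Y₁, hY₁, Y₂, hY₂, hC, hI, hle⟩ := exists_sigmaSlack_le_of_signs
      (lower := lower) (upper := upper) hX₁ hX₂
    have := h Y₁ hY₁ Y₂ hY₂ (fun t ht => (hD t (sdiff_subset ht)).2 (hC t ht))
      (fun t ht => (hU t (hY₁ (inter_subset_left ht))).2 (hI t ht))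
    rw [hslack Y₁ hY₁ Y₂ hC hI] at hle
    omega

end SignPattern

section Partition

variable (S0 Sp1 Sm1 Sp Sm : Finset (ℕ × ℕ))

def signLower (t : ℕ × ℕ) : ℤ := if t ∈ Sp1 then 1 else if t ∈ S0 ∪ Sp then 0 else -1

def signUpper (t : ℕ × ℕ) : ℤ := if t ∈ Sm1 then -1 else if t ∈ S0 ∪ Sm then 0 else 1

variable {S0 Sp1 Sm1 Sp Sm}

lemma signLower_le_signUpper (h0p1 : Disjoint S0 Sp1) (h0m1 : Disjoint S0 Sm1)
    (hp1m1 : Disjoint Sp1 Sm1) (hp1m : Disjoint Sp1 Sm) (hm1p : Disjoint Sm1 Sp) (t : ℕ × ℕ) :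
    signLower S0 Sp1 Sp t ≤ signUpper S0 Sm1 Sm t := by
  rw [disjoint_left] at h0p1 h0m1 hp1m1 hp1m hm1p
  unfold signLower signUpper
  split_ifs <;> simp_all

lemma compatible_iff_sign_bounds {n : ℕ} {A : ℕ × ℕ → ℤ}
    (hsub : S0 ∪ Sp1 ∪ Sm1 ∪ Sp ∪ Sm ⊆ Smn n n) (hA : ∀ t ∈ Smn n n, |A t| ≤ 1) :
    ((∀ s ∈ S0, A s = 0) ∧ (∀ s ∈ Sp1, A s = 1) ∧ (∀ s ∈ Sm1, A s = -1) ∧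
        (∀ s ∈ Sp, 0 ≤ A s) ∧ (∀ s ∈ Sm, A s ≤ 0)) ↔
      ∀ t ∈ Smn n n, signLower S0 Sp1 Sp t ≤ A t ∧ A t ≤ signUpper S0 Sm1 Sm t := by
  constructor
  · rintro ⟨h0, h1, hm1, hp, hm⟩ t ht
    obtain ⟨hneg, hone⟩ := abs_le.1 (hA t ht)
    constructor
    · unfold signLower
      split_ifs with hp1 hnonneg
      · exact (h1 t hp1).ge
      · rcases mem_union.1 hnonneg with h | h
        · exact (h0 t h).ge
        · exact hp t h
      · exact hneg
    · unfold signUpper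
      split_ifs with hm1' hnonpos
      · exact (hm1 t hm1').le
      · rcases mem_union.1 hnonpos with h | h
        · exact (h0 t h).le
        · exact hm t h
      · exact hone
  · intro hb
    refine ⟨fun s hs => ?_, fun s hs => ?_, fun s hs => ?_, fun s hs => ?_, fun s hs => ?_⟩ <;>
    · have := hb s (hsub (by simp [hs]))
      unfold signLower signUpper at this
      split_ifs at this <;> simp_all <;> omega

theorem sigmaCond_signLower_signUpper_iff {n : ℕ} :
    SigmaCond n (signLower S0 Sp1 Sp) (signUpper S0 Sm1 Sm) ↔
      ∀ X₁ ⊆ Smn n n, ∀ X₂ ⊆ Smn n n, Smn n n \ (X₁ ∪ X₂) ⊆ S0 ∪ Sm1 ∪ Sm →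
        X₁ ∩ X₂ ⊆ S0 ∪ Sp1 ∪ Sp →
        n + #(Sm1 ∩ (Smn n n \ (X₁ ∪ X₂))) + #(Sp1 ∩ X₁ ∩ X₂) ≤ sigma1 X₁ + sigma2 X₂ :=
  sigmaCond_iff_card_le
    (fun t _ => by unfold signUpper; split_ifs <;> simp)
    (fun t _ => by unfold signLower; split_ifs <;> simp)
    (fun t _ => by unfold signUpper; split_ifs <;> simp_all)
    (fun t _ => by unfold signLower; split_ifs <;> simp_all)
    (fun t _ => by unfold signUpper; split_ifs <;> simp_all)
    (fun t _ => by unfold signLower; split_ifs <;> simp_all)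

end Partition

theorem stmt_17_general (n : ℕ)
    (S0 Sp1 Sm1 Sp Sm SF : Finset (ℕ × ℕ))
    (hcover : S0 ∪ Sp1 ∪ Sm1 ∪ Sp ∪ Sm ∪ SF = Smn n n)
    (hdisj : List.Pairwise Disjoint [S0, Sp1, Sm1, Sp, Sm, SF]) :
    (∃ A : ℕ × ℕ → ℤ, IsASM n A ∧
        (∀ s ∈ S0, A s = 0) ∧ (∀ s ∈ Sp1, A s = 1) ∧ (∀ s ∈ Sm1, A s = -1) ∧
        (∀ s ∈ Sp, 0 ≤ A s) ∧ (∀ s ∈ Sm, A s ≤ 0)) ↔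
      (∀ X₁ ⊆ Smn n n, ∀ X₂ ⊆ Smn n n,
        Smn n n \ (X₁ ∪ X₂) ⊆ S0 ∪ Sm1 ∪ Sm →
        X₁ ∩ X₂ ⊆ S0 ∪ Sp1 ∪ Sp →
        n + (Sm1 ∩ (Smn n n \ (X₁ ∪ X₂))).card + (Sp1 ∩ X₁ ∩ X₂).card ≤
          sigma1 X₁ + sigma2 X₂) := by
  simp only [List.pairwise_cons, List.mem_cons, List.not_mem_nil, forall_eq_or_imp,
    List.Pairwise.nil] at hdisj
  obtain ⟨⟨h0p1, h0m1, -⟩, ⟨hp1m1, -, hp1m, -⟩, ⟨hm1p, -⟩, -⟩ := hdisj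
  have hsub : S0 ∪ Sp1 ∪ Sm1 ∪ Sp ∪ Sm ⊆ Smn n n := hcover ▸ subset_union_left
  rw [← sigmaCond_signLower_signUpper_iff]
  constructor
  · rintro ⟨A, hA, hcompat⟩
    exact hA.sigmaCond ((compatible_iff_sign_bounds hsub fun _ => hA.abs_le_one).1 hcompat)
  · intro h
    obtain ⟨A, hA, hbounds⟩ :=
      h.exists_isASM fun t _ => signLower_le_signUpper h0p1 h0m1 hp1m1 hp1m hm1p t
    exact ⟨A, hA, (compatible_iff_sign_bounds hsub fun _ => hA.abs_le_one).2 hbounds⟩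

/-- existence of an S-compatible alternating sign matrix for a
partition {S₀, S₊₁, S₋₁, S₊, S₋, S_F} of S_{n,n} (Theorem AS-feas2). -/
theorem stmt_17 (n : ℕ) (hn : 1 ≤ n)
    (S0 Sp1 Sm1 Sp Sm SF : Finset (ℕ × ℕ))
    (hcover : S0 ∪ Sp1 ∪ Sm1 ∪ Sp ∪ Sm ∪ SF = Smn n n)
    (hdisj : List.Pairwise Disjoint [S0, Sp1, Sm1, Sp, Sm, SF]) :
    (∃ A : ℕ × ℕ → ℤ, IsASM n A ∧
        (∀ s ∈ S0, A s = 0) ∧ (∀ s ∈ Sp1, A s = 1) ∧ (∀ s ∈ Sm1, A s = -1) ∧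
        (∀ s ∈ Sp, 0 ≤ A s) ∧ (∀ s ∈ Sm, A s ≤ 0)) ↔
      (∀ X₁ ⊆ Smn n n, ∀ X₂ ⊆ Smn n n,
        Smn n n \ (X₁ ∪ X₂) ⊆ S0 ∪ Sm1 ∪ Sm →
        X₁ ∩ X₂ ⊆ S0 ∪ Sp1 ∪ Sp →
        n + (Sm1 ∩ (Smn n n \ (X₁ ∪ X₂))).card + (Sp1 ∩ X₁ ∩ X₂).card ≤
          sigma1 X₁ + sigma2 X₂) :=
  stmt_17_general n S0 Sp1 Sm1 Sp Sm SF hcover hdisj
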